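/- arXiv:2111.13857 — 2 statements merged into one kernel-verified Lean document; each statement's English description precedes it below -/
import Mathlib

section
/- For j ≥ 2 and k ≥ 1, the polynomials P_j(k) = Σ_{i=0}^{⌊j/2⌋} C(j−2, 2i)·C(k−i+j−2, j−2) satisfy the difference relation P_j(k) − P_j(k−1) = C(j+2k−3, j−3). -/
/-- Binomial coefficient with integer arguments, zero outside `0 ≤ k ≤ n`. -/
def chooseZ (n k : ℤ) : ℤ := if 0 ≤ k ∧ k ≤ n then (Nat.choose n.toNat k.toNat : ℤ) else 0

/-- `P_j(k) = Σ_{i=0}^{⌊j/2⌋} C(j−2, 2i)·C(k−i+j−2, j−2)`. -/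
def P (j : ℕ) (k : ℤ) : ℤ :=
  ∑ i ∈ Finset.range (j / 2 + 1),
    ((j - 2).choose (2 * i) : ℤ) * chooseZ (k - i + j - 2) ((j : ℤ) - 2)


lemma chooseZ_cast (n s : ℕ) : chooseZ (n:ℤ) (s:ℤ) = (n.choose s : ℤ) := by
  unfold chooseZ
  split_ifs with h
  · simp
  · push_neg at h
    have h2 : (n:ℤ) < s := h (by positivity)
    have h3 : n < s := by exact_mod_cast h2
    simp [Nat.choose_eq_zero_of_lt h3]

lemma chooseZ_pascal (n s : ℕ) :
    chooseZ ((n:ℤ)+1) ((s:ℤ)+1) = chooseZ (n:ℤ) (s:ℤ) + chooseZ (n:ℤ) ((s:ℤ)+1) := by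
  have h1 : ((n:ℤ)+1) = ((n+1:ℕ):ℤ) := by push_cast; ring
  have h2 : ((s:ℤ)+1) = ((s+1:ℕ):ℤ) := by push_cast; ring
  rw [h1, h2, chooseZ_cast, chooseZ_cast, chooseZ_cast]
  exact_mod_cast Nat.choose_succ_succ n s

lemma chooseZ_neg (n k : ℤ) (h : k < 0) : chooseZ n k = 0 := by
  unfold chooseZ
  split_ifs with h'
  · omega
  · rfl

lemma chooseZ_zero_right (n : ℤ) (h : 0 ≤ n) : chooseZ n 0 = 1 := by
  unfold chooseZ
  rw [if_pos ⟨le_refl 0, h⟩]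
  simp

def fA (r K : ℕ) : ℕ := ∑ i ∈ Finset.range (r+2), (r+1).choose (2*i) * (K + r - i).choose r
def gB (r K : ℕ) : ℕ := ∑ i ∈ Finset.range (r+2), (r+1).choose (2*i+1) * (K + r - i).choose r

lemma fA_zero (r : ℕ) : fA r 0 = 1 := by
  unfold fA
  rw [Finset.sum_eq_single 0]
  · simp
  · intro i hi hne
    simp only [Finset.mem_range] at hi
    by_cases h : r+1 < 2*i
    · simp [Nat.choose_eq_zero_of_lt h]
    · have h2 : 0 + r - i < r := by omega
      refine mul_eq_zero_of_right _ (Nat.choose_eq_zero_of_lt ?_)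
      omega
  · intro h; simp at h

lemma gB_zero (r : ℕ) : gB r 0 = r + 1 := by
  unfold gB
  rw [Finset.sum_eq_single 0]
  · simp
  · intro i hi hne
    simp only [Finset.mem_range] at hi
    by_cases h : r+1 < 2*i+1
    · simp [Nat.choose_eq_zero_of_lt h]
    · have h2 : 0 + r - i < r := by omega
      refine mul_eq_zero_of_right _ (Nat.choose_eq_zero_of_lt ?_)
      omega
  · intro h; simp at h

lemma fA_ext (r K : ℕ) : fA r K = ∑ i ∈ Finset.range (r+3), (r+1).choose (2*i) * (K + r - i).choose r := by
  unfold fA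
  rw [Finset.sum_range_succ (n := r+2)]
  have h : (r+1).choose (2*(r+2)) = 0 := Nat.choose_eq_zero_of_lt (by omega)
  simp [h]

lemma gB_ext (r K : ℕ) : gB r K = ∑ i ∈ Finset.range (r+3), (r+1).choose (2*i+1) * (K + r - i).choose r := by
  unfold gB
  rw [Finset.sum_range_succ (n := r+2)]
  have h : (r+1).choose (2*(r+2)+1) = 0 := Nat.choose_eq_zero_of_lt (by omega)
  simp [h]

lemma fA_rec (r K : ℕ) : fA (r+1) (K+1) = fA r (K+1) + gB r K + fA (r+1) K := by
  have h1 : fA (r+1) (K+1)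
      = (∑ i ∈ Finset.range (r+3), (r+2).choose (2*i) * (K+r+1-i).choose r) + fA (r+1) K := by
    unfold fA
    rw [← Finset.sum_add_distrib]
    apply Finset.sum_congr rfl
    intro i hi
    simp only [Finset.mem_range] at hi
    by_cases h : i ≤ K + r + 1
    · have e : K + 1 + (r+1) - i = (K + r + 1 - i) + 1 := by omega
      have e2 : K + (r+1) - i = K + r + 1 - i := by omega
      rw [e, e2, Nat.choose_succ_succ', Nat.mul_add]
    · have hz : (r+2).choose (2*i) = 0 := Nat.choose_eq_zero_of_lt (by omega)
      simp [hz]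
  rw [h1]
  congr 1
  -- ⊢ ∑ i in range (r+3), (r+2).choose (2*i) * (K+r+1-i).choose r = fA r (K+1) + gB r K
  rw [Finset.sum_range_succ']
  have e1 : ∀ i ∈ Finset.range (r+2),
      (r+2).choose (2*(i+1)) * (K+r+1-(i+1)).choose r
      = (r+1).choose (2*i+1) * (K+r-i).choose r + (r+1).choose (2*i+2) * (K+r-i).choose r := by
    intro i hi
    have e : 2*(i+1) = (2*i+1)+1 := by ring
    have e2 : K+r+1-(i+1) = K+r-i := by omega
    rw [e, e2, Nat.choose_succ_succ', Nat.add_mul]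
  rw [Finset.sum_congr rfl e1, Finset.sum_add_distrib]
  have hA : fA r (K+1) = (∑ i ∈ Finset.range (r+2), (r+1).choose (2*i+2) * (K+r-i).choose r)
      + (K+r+1).choose r := by
    rw [fA_ext, Finset.sum_range_succ']
    congr 1
    · apply Finset.sum_congr rfl
      intro i hi
      have e : 2*(i+1) = 2*i+2 := by ring
      have e2 : K+1+r-(i+1) = K+r-i := by omega
      rw [e, e2]
    · have e2 : K+1+r-0 = K+r+1 := by omega
      simp [e2]
  have hg : gB r K = ∑ i ∈ Finset.range (r+2), (r+1).choose (2*i+1) * (K+r-i).choose r := rfl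
  have h0 : (r+2).choose (2*0) * (K+r+1-0).choose r = (K+r+1).choose r := by simp
  rw [hA, hg, h0]
  omega

lemma gB_rec (r K : ℕ) : gB (r+1) (K+1) = fA r (K+1) + gB r (K+1) + gB (r+1) K := by
  have h1 : gB (r+1) (K+1)
      = (∑ i ∈ Finset.range (r+3), (r+2).choose (2*i+1) * (K+r+1-i).choose r) + gB (r+1) K := by
    unfold gB
    rw [← Finset.sum_add_distrib]
    apply Finset.sum_congr rfl
    intro i hi
    simp only [Finset.mem_range] at hi
    by_cases h : i ≤ K + r + 1
    · have e : K + 1 + (r+1) - i = (K + r + 1 - i) + 1 := by omega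
      have e2 : K + (r+1) - i = K + r + 1 - i := by omega
      rw [e, e2, Nat.choose_succ_succ' (K+r+1-i) r, Nat.mul_add]
    · have hz : (r+2).choose (2*i+1) = 0 := Nat.choose_eq_zero_of_lt (by omega)
      simp [hz]
  rw [h1]
  congr 1
  have e1 : ∀ i ∈ Finset.range (r+3),
      (r+2).choose (2*i+1) * (K+r+1-i).choose r
      = (r+1).choose (2*i) * (K+1+r-i).choose r + (r+1).choose (2*i+1) * (K+1+r-i).choose r := by
    intro i hi
    have e2 : K+r+1-i = K+1+r-i := by omega
    rw [e2, Nat.choose_succ_succ', Nat.add_mul]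
  rw [Finset.sum_congr rfl e1, Finset.sum_add_distrib, ← fA_ext, ← gB_ext]

lemma fg (r : ℕ) : ∀ K : ℕ, fA r K = (2*K+r).choose r ∧ gB r K = (2*K+r+1).choose r := by
  induction r with
  | zero =>
    intro K
    constructor
    · unfold fA
      simp [Finset.sum_range_succ]
    · unfold gB
      simp [Finset.sum_range_succ, show Nat.choose 1 3 = 0 from rfl]
  | succ r ih =>
    intro K
    induction K with
    | zero =>
      constructor
      · rw [fA_zero]
        have e : 2*0+(r+1) = r+1 := by omega
        rw [e, Nat.choose_self]
      · rw [gB_zero]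
        have e : 2*0+(r+1)+1 = (r+1)+1 := by omega
        rw [e, Nat.choose_succ_self_right]
    | succ K ihK =>
      obtain ⟨ihK1, ihK2⟩ := ihK
      obtain ⟨ihA, ihB⟩ := ih K
      obtain ⟨ihA', ihB'⟩ := ih (K+1)
      have key : ∀ n s : ℕ, (n+2).choose (s+1) = (n+1).choose s + n.choose s + n.choose (s+1) := by
        intro n s
        rw [show n+2 = (n+1)+1 from rfl, Nat.choose_succ_succ' (n+1) s,
          Nat.choose_succ_succ' n s]
        omega
      constructor
      · rw [fA_rec, ihA', ihB, ihK1,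
          show 2*(K+1)+r = (2*K+r+1)+1 by ring,
          show 2*K+(r+1) = 2*K+r+1 by ring,
          show 2*(K+1)+(r+1) = (2*K+r+1)+2 by ring,
          key (2*K+r+1) r]
      · rw [gB_rec, ihA', ihB', ihK2,
          show 2*(K+1)+r = 2*K+r+2 by ring,
          show 2*K+(r+1)+1 = 2*K+r+2 by ring,
          show 2*(K+1)+(r+1)+1 = (2*K+r+2)+2 by ring,
          key (2*K+r+2) r]
        omega


lemma P_eq (r : ℕ) (k : ℤ) :
    P (r+3) k = ∑ i ∈ Finset.range (r+2),
      ((r+1).choose (2*i) : ℤ) * chooseZ (k + ((r:ℤ)+1) - i) ((r:ℤ)+1) := by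
  unfold P
  have hsub : Finset.range ((r+3)/2+1) ⊆ Finset.range (r+2) := Finset.range_subset_range.2 (by omega)
  rw [Finset.sum_subset hsub ?_]
  · apply Finset.sum_congr rfl
    intro i _
    have e0 : r+3-2 = r+1 := by omega
    have ea : k - (i:ℤ) + ((r+3:ℕ):ℤ) - 2 = k + ((r:ℤ)+1) - i := by push_cast; ring
    have eb : ((r+3:ℕ):ℤ) - 2 = (r:ℤ)+1 := by push_cast; ring
    rw [e0, ea, eb]
  · intro i _ hi
    simp only [Finset.mem_range, not_lt] at hi
    have hz : (r+3-2).choose (2*i) = 0 := Nat.choose_eq_zero_of_lt (by omega)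
    exact mul_eq_zero_of_left (by exact_mod_cast hz) _

/-- The difference relation `P_j(k) − P_j(k−1) = C(j+2k−3, j−3)` for `j ≥ 2`, `k ≥ 1`. -/
theorem stmt3 (j : ℕ) (k : ℤ) (hj : 2 ≤ j) (hk : 1 ≤ k) :
    P j k - P j (k - 1) = chooseZ ((j : ℤ) + 2 * k - 3) ((j : ℤ) - 3) := by
  rcases eq_or_lt_of_le hj with hj2 | hj3
  · -- case j = 2
    subst hj2
    have hP : ∀ m : ℤ, 0 ≤ m → P 2 m = 1 := by
      intro m hm
      unfold P
      rw [show (2:ℕ)/2+1 = 2 from rfl, Finset.sum_range_succ, Finset.sum_range_succ,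
        Finset.sum_range_zero]
      have h1 : (2-2 : ℕ).choose (2*1) = 0 := rfl
      have h0 : (2-2 : ℕ).choose (2*0) = 1 := rfl
      rw [h1, h0]
      have e : m - (0:ℕ) + ((2:ℕ):ℤ) - 2 = m := by push_cast; ring
      rw [e, show ((2:ℕ):ℤ) - 2 = 0 by norm_num, chooseZ_zero_right m hm]
      norm_num
    rw [hP k (by omega), hP (k-1) (by omega)]
    rw [chooseZ_neg _ _ (by norm_num)]
    ring
  · -- case j ≥ 3
    obtain ⟨r, rfl⟩ : ∃ r, j = r + 3 := ⟨j - 3, by omega⟩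
    obtain ⟨K, rfl, hK⟩ : ∃ K : ℕ, (K:ℤ) = k ∧ 1 ≤ K := ⟨k.toNat, by omega, by omega⟩
    rw [P_eq, P_eq, ← Finset.sum_sub_distrib]
    have hterm : ∀ i ∈ Finset.range (r+2),
        ((r+1).choose (2*i) : ℤ) * chooseZ ((K:ℤ) + ((r:ℤ)+1) - i) ((r:ℤ)+1)
        - ((r+1).choose (2*i) : ℤ) * chooseZ ((K:ℤ) - 1 + ((r:ℤ)+1) - i) ((r:ℤ)+1)
        = (((r+1).choose (2*i) * (K+r-i).choose r : ℕ) : ℤ) := by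
      intro i hi
      simp only [Finset.mem_range] at hi
      by_cases h : i ≤ r
      · have e1 : (K:ℤ) + ((r:ℤ)+1) - i = ((K+r-i : ℕ):ℤ) + 1 := by push_cast [show i ≤ K+r by omega]; ring
        have e2 : (K:ℤ) - 1 + ((r:ℤ)+1) - i = ((K+r-i : ℕ):ℤ) := by push_cast [show i ≤ K+r by omega]; ring
        rw [e1, e2, chooseZ_pascal (K+r-i) r, chooseZ_cast (K+r-i) r]
        push_cast
        ring
      · have hz : (r+1).choose (2*i) = 0 := Nat.choose_eq_zero_of_lt (by omega)
        rw [hz]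
        push_cast
        ring
    rw [Finset.sum_congr rfl hterm, ← Nat.cast_sum]
    have : ∑ i ∈ Finset.range (r+2), (r+1).choose (2*i) * (K+r-i).choose r = (2*K+r).choose r :=
      (fg r K).1
    rw [this]
    have e3 : ((r+3:ℕ):ℤ) + 2*(K:ℤ) - 3 = ((2*K+r : ℕ):ℤ) := by push_cast; ring
    have e4 : ((r+3:ℕ):ℤ) - 3 = ((r:ℕ):ℤ) := by push_cast; ring
    rw [e3, e4, chooseZ_cast]
end

section
/- For the multiplicity recursion of tilting U_q(sl₂)-modules at an odd l-th root of unity — defined by M_{T(0)}(N+1) = M_{T(1)}(N); M_{T(lk₁+k₀)}(N+1) = M_{T(lk₁+k₀−1)}(N) + M_{T(lk₁+k₀+1)}(N) for 1 ≤ k₀ ≤ l−3, k₁ ≥ 0; M_{T(lk₁−2)}(N+1) = M_{T(lk₁−3)}(N) for k₁ ≥ 1; M_{T(lk₁−1)}(N+1) = M_{T(lk₁−2)}(N) + 2·M_{T(lk₁)}(N) + M_{T((k₁+2)l−2)}(N) for k₁ ≥ 1; M_{T(lk₁)}(N+1) = M_{T(lk₁−1)}(N) + M_{T(lk₁+1)}(N)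 for k₁ ≥ 1; with initial condition M_{T(k)}(0) = δ_{k,0} — the solution for k in the first strip 0 ≤ k ≤ l−2 and all N with N ≡ k mod 2 is M_{T(k)}(N) = F_k^{(N)} + Σ_{j=1}^{⌊(N+1)/(2l)+1/2⌋} F_{−2jl+k}^{(N)} + Σ_{j=1}^{⌊(N+1)/(2l)⌋} F_{k+2jl}^{(N)}, where F_M^{(N)} = C(N,(N−M)/2) − C(N,(N−M)/2 − 1). -/
/-- `F_M^{(N)} = C(N,(N−M)/2) − C(N,(N−M)/2 − 1)`. -/
def Fb (M : ℤ) (N : ℕ) : ℤ :=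
  chooseZ N (((N : ℤ) - M) / 2) - chooseZ N (((N : ℤ) - M) / 2 - 1)

lemma chooseZ_pascal_s11 (N : ℕ) (x : ℤ) :
    chooseZ (N + 1) x = chooseZ N x + chooseZ N (x - 1) := by
  unfold chooseZ
  by_cases h0 : 0 ≤ x
  · by_cases hN : x ≤ (N : ℤ)
    · -- 0 ≤ x ≤ N
      rw [if_pos ⟨h0, by omega⟩, if_pos ⟨h0, hN⟩]
      by_cases hx0 : x = 0
      · subst hx0
        rw [if_neg (by omega)]
        simp
      · rw [if_pos ⟨by omega, by omega⟩]
        obtain ⟨t, ht⟩ : ∃ t : ℕ, x = (t : ℤ) + 1 := ⟨(x - 1).toNat, by omega⟩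
        subst ht
        have e1 : ((N : ℤ) + 1).toNat = N + 1 := by omega
        have e2 : ((t : ℤ) + 1).toNat = t + 1 := by omega
        have e3 : ((t : ℤ) + 1 - 1).toNat = t := by omega
        have e4 : ((N : ℤ)).toNat = N := by omega
        rw [e1, e2, e3, e4, Nat.choose_succ_succ']
        push_cast; ring
    · by_cases hN1 : x ≤ (N : ℤ) + 1
      · -- x = N + 1
        have hx : x = (N : ℤ) + 1 := by omega
        subst hx
        rw [if_pos ⟨h0, by omega⟩, if_neg (by omega), if_pos ⟨by omega, by omega⟩]
        have e1 : ((N : ℤ) + 1).toNat = N + 1 := by omega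
        have e3 : ((N : ℤ) + 1 - 1).toNat = N := by omega
        have e4 : ((N : ℤ)).toNat = N := by omega
        rw [e1, e3, e4, Nat.choose_self, Nat.choose_self]
        simp
      · rw [if_neg (by omega), if_neg (by omega), if_neg (by omega)]; ring
  · rw [if_neg (by omega), if_neg (by omega), if_neg (by omega)]; ring

lemma chooseZ_symm (N : ℕ) (x : ℤ) : chooseZ N x = chooseZ N ((N : ℤ) - x) := by
  unfold chooseZ
  by_cases h : 0 ≤ x ∧ x ≤ (N : ℤ)
  · rw [if_pos h, if_pos ⟨by omega, by omega⟩]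
    have e1 : ((N : ℤ) - x).toNat = N - x.toNat := by omega
    have e4 : ((N : ℤ)).toNat = N := by omega
    rw [e1, e4, Nat.choose_symm (by omega)]
  · rw [if_neg h, if_neg (by omega)]

lemma Fb_pascal (M : ℤ) (N : ℕ) : Fb M (N + 1) = Fb (M - 1) N + Fb (M + 1) N := by
  unfold Fb
  have e0 : ((N : ℤ) + 1 : ℤ) = ((N + 1 : ℕ) : ℤ) := by push_cast; ring
  have e1 : (((N + 1 : ℕ) : ℤ) - M) / 2 = ((N : ℤ) - (M - 1)) / 2 := by push_cast; omega
  have e2 : ((N : ℤ) - (M + 1)) / 2 = (((N + 1 : ℕ) : ℤ) - M) / 2 - 1 := by push_cast; omega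
  rw [e2, ← e1]
  rw [show ((N + 1 : ℕ) : ℤ) = (N : ℤ) + 1 by push_cast; ring]
  rw [chooseZ_pascal_s11, chooseZ_pascal_s11]
  ring

lemma Fb_zero_of_big (M : ℤ) (N : ℕ) (h : (N : ℤ) + 1 ≤ M ∨ M ≤ -(N : ℤ) - 4) :
    Fb M N = 0 := by
  unfold Fb chooseZ
  rcases h with h | h
  · rw [if_neg (by omega), if_neg (by omega)]; ring
  · rw [if_neg (by omega), if_neg (by omega)]; ring

lemma Fb_neg (M : ℤ) (N : ℕ) (h : ((N : ℤ) - M) % 2 = 0) : Fb (-M - 2) N = -Fb M N := by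
  unfold Fb
  rw [chooseZ_symm N (((N : ℤ) - (-M - 2)) / 2),
      chooseZ_symm N (((N : ℤ) - (-M - 2)) / 2 - 1)]
  have e1 : (N : ℤ) - ((N : ℤ) - (-M - 2)) / 2 = ((N : ℤ) - M) / 2 - 1 := by omega
  have e2 : (N : ℤ) - (((N : ℤ) - (-M - 2)) / 2 - 1) = ((N : ℤ) - M) / 2 := by omega
  rw [e1, e2]
  ring

/-- Partial reflection sum with explicit bound `B`. -/
def SfB (l N B : ℕ) (k : ℤ) : ℤ :=
  Fb k N + (∑ j ∈ Finset.Icc 1 B, Fb (k - 2 * (j : ℤ) * l) N)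
         + (∑ j ∈ Finset.Icc 1 B, Fb (k + 2 * (j : ℤ) * l) N)

lemma vanish_pos {l : ℕ} (hl : 3 ≤ l) {k : ℤ} (hk : -1 ≤ k) {N j : ℕ} (hj : N + 1 ≤ j) :
    Fb (k + 2 * (j : ℤ) * l) N = 0 := by
  apply Fb_zero_of_big
  left
  have h1 : ((N : ℤ) + 1) * 3 ≤ (j : ℤ) * (l : ℤ) := by
    have : (3 : ℤ) ≤ (l : ℤ) := by exact_mod_cast hl
    have : ((N : ℤ) + 1) ≤ (j : ℤ) := by exact_mod_cast hj
    nlinarith [Int.ofNat_nonneg N, Int.ofNat_nonneg j]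
  nlinarith [Int.ofNat_nonneg N]

lemma vanish_neg {l : ℕ} (hl : 3 ≤ l) {k : ℤ} (hk : k ≤ (l : ℤ) - 1) {N j : ℕ}
    (hj : N + 1 ≤ j) : Fb (k - 2 * (j : ℤ) * l) N = 0 := by
  apply Fb_zero_of_big
  right
  have h1 : ((N : ℤ) + 1) * 3 ≤ (j : ℤ) * (l : ℤ) := by
    have : (3 : ℤ) ≤ (l : ℤ) := by exact_mod_cast hl
    have : ((N : ℤ) + 1) ≤ (j : ℤ) := by exact_mod_cast hj
    nlinarith [Int.ofNat_nonneg N, Int.ofNat_nonneg j]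
  have h2 : (l : ℤ) ≤ (j : ℤ) * (l : ℤ) := by
    have hj1 : (1 : ℤ) ≤ (j : ℤ) := by exact_mod_cast Nat.one_le_iff_ne_zero.mpr (by omega)
    nlinarith [Int.ofNat_nonneg l]
  nlinarith [Int.ofNat_nonneg N]

lemma SfB_ext {l : ℕ} (hl : 3 ≤ l) {k : ℤ} (hk : -1 ≤ k ∧ k ≤ (l : ℤ) - 1) {N B : ℕ}
    (hB : N + 1 ≤ B) : SfB l N B k = SfB l N (N + 1) k := by
  unfold SfB
  congr 1
  · congr 1
    apply (Finset.sum_subset (Finset.Icc_subset_Icc_right hB) _).symm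
    intro j hj hj'
    simp only [Finset.mem_Icc] at hj hj'
    exact vanish_neg hl hk.2 (by omega)
  · apply (Finset.sum_subset (Finset.Icc_subset_Icc_right hB) _).symm
    intro j hj hj'
    simp only [Finset.mem_Icc] at hj hj'
    exact vanish_pos hl hk.1 (by omega)

/-- Pascal step for the reflection sum. -/
lemma SfB_step {l : ℕ} (hl : 3 ≤ l) {k : ℤ} (hk0 : 0 ≤ k) (hk1 : k ≤ (l : ℤ) - 2) (N : ℕ) :
    SfB l (N + 1) (N + 2) k = SfB l N (N + 1) (k - 1) + SfB l N (N + 1) (k + 1) := by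
  have key : SfB l (N + 1) (N + 2) k = SfB l N (N + 2) (k - 1) + SfB l N (N + 2) (k + 1) := by
    unfold SfB
    rw [Fb_pascal]
    have e1 : ∑ j ∈ Finset.Icc 1 (N + 2), Fb (k - 2 * (j : ℤ) * l) (N + 1)
        = ∑ j ∈ Finset.Icc 1 (N + 2),
            (Fb (k - 1 - 2 * (j : ℤ) * l) N + Fb (k + 1 - 2 * (j : ℤ) * l) N) := by
      apply Finset.sum_congr rfl
      intro j _
      rw [Fb_pascal]
      congr 1 <;> congr 1 <;> ring
    have e2 : ∑ j ∈ Finset.Icc 1 (N + 2), Fb (k + 2 * (j : ℤ) * l) (N + 1)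
        = ∑ j ∈ Finset.Icc 1 (N + 2),
            (Fb (k - 1 + 2 * (j : ℤ) * l) N + Fb (k + 1 + 2 * (j : ℤ) * l) N) := by
      apply Finset.sum_congr rfl
      intro j _
      rw [Fb_pascal]
      congr 1 <;> congr 1 <;> ring
    rw [e1, e2, Finset.sum_add_distrib, Finset.sum_add_distrib]
    ring
  rw [key, SfB_ext hl (k := k - 1) ⟨by omega, by omega⟩ (by omega),
      SfB_ext hl (k := k + 1) ⟨by omega, by omega⟩ (by omega)]

/-- The wall at `-1`. -/
lemma SfB_wall_neg {l N B : ℕ} (hpar : N % 2 = 1) : SfB l N B (-1) = 0 := by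
  have hFb : Fb (-1) N = 0 := by
    have h := Fb_neg (-1) N (by omega)
    rw [show -(-1 : ℤ) - 2 = -1 by ring] at h
    linarith
  have hsum : ∑ j ∈ Finset.Icc 1 B, Fb (-1 - 2 * (j : ℤ) * l) N
      = -∑ j ∈ Finset.Icc 1 B, Fb (-1 + 2 * (j : ℤ) * l) N := by
    rw [← Finset.sum_neg_distrib]
    apply Finset.sum_congr rfl
    intro j _
    rw [← Fb_neg (-1 + 2 * (j : ℤ) * l) N (by
      have : (N : ℤ) - (-1 + 2 * (j : ℤ) * l) = (N : ℤ) + 1 - 2 * ((j : ℤ) * l) := by ring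
      omega)]
    congr 1; ring
  unfold SfB
  rw [hFb, hsum]; ring

/-- The wall at `l - 1`. -/
lemma SfB_wall_pos {l N : ℕ} (hl : 3 ≤ l) (hpar : (N : ℤ) % 2 = ((l : ℤ) - 1) % 2) :
    SfB l N (N + 1) ((l : ℤ) - 1) = 0 := by
  set f : ℕ → ℤ := fun j => Fb ((l : ℤ) - 1 + 2 * (j : ℤ) * l) N with hf
  set g : ℕ → ℤ := fun j => Fb ((l : ℤ) - 1 - 2 * (j : ℤ) * l) N with hg
  have hA : ∀ j : ℕ, g (j + 1) = -f j := by
    intro j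
    simp only [hf, hg]
    rw [← Fb_neg ((l : ℤ) - 1 + 2 * (j : ℤ) * l) N (by
      have : (N : ℤ) - ((l : ℤ) - 1 + 2 * (j : ℤ) * l)
          = (N : ℤ) - (l : ℤ) + 1 - 2 * ((j : ℤ) * l) := by ring
      omega)]
    congr 1
    push_cast
    ring
  have hneg : ∑ j ∈ Finset.Icc 1 (N + 1), g j = -(f 0 + ∑ j ∈ Finset.Icc 1 N, f j) := by
    have hre : Finset.Icc 1 (N + 1) = Finset.map (addRightEmbedding 1) (Finset.Icc 0 N) := by
      rw [Finset.map_add_right_Icc]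
    rw [hre, Finset.sum_map]
    have : ∀ i ∈ Finset.Icc 0 N, g (addRightEmbedding 1 i) = -f i := by
      intro i _
      exact hA i
    rw [Finset.sum_congr rfl this]
    rw [show Finset.Icc 0 N = insert 0 (Finset.Icc 1 N) by ext x; simp; omega]
    rw [Finset.sum_insert (by simp), Finset.sum_neg_distrib]
    ring
  have hpos : ∑ j ∈ Finset.Icc 1 (N + 1), f j = (∑ j ∈ Finset.Icc 1 N, f j) + f (N + 1) :=
    Finset.sum_Icc_succ_top (by omega) f
  have hfN : f (N + 1) = 0 := vanish_pos hl (by omega) (le_refl _)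
  have hf0 : f 0 = Fb ((l : ℤ) - 1) N := by simp [hf]
  unfold SfB
  rw [hneg, hpos, hfN, hf0]
  ring

lemma main_ind (l : ℕ) (hl : 3 ≤ l) (Mu : ℕ → ℕ → ℤ)
    (h0 : ∀ k, Mu k 0 = if k = 0 then 1 else 0)
    (h1 : ∀ N, Mu 0 (N + 1) = Mu 1 N)
    (h2 : ∀ N k₀ k₁, 1 ≤ k₀ → k₀ ≤ l - 3 →
      Mu (l * k₁ + k₀) (N + 1) = Mu (l * k₁ + k₀ - 1) N + Mu (l * k₁ + k₀ + 1) N)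
    (h3 : ∀ N k₁, 1 ≤ k₁ → Mu (l * k₁ - 2) (N + 1) = Mu (l * k₁ - 3) N) :
    ∀ N k, k ≤ l - 2 →
      (N % 2 = k % 2 → Mu k N = SfB l N (N + 1) (k : ℤ)) ∧
      (N % 2 ≠ k % 2 → Mu k N = 0) := by
  intro N
  induction N with
  | zero =>
    intro k hk
    have hkz : (k : ℤ) ≤ (l : ℤ) - 2 := by omega
    constructor
    · intro hp
      rw [h0]
      have hsf : SfB l 0 1 (k : ℤ)
          = Fb k 0 + Fb ((k : ℤ) - 2 * 1 * l) 0 + Fb ((k : ℤ) + 2 * 1 * l) 0 := by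
        unfold SfB
        rw [Finset.Icc_self, Finset.sum_singleton, Finset.sum_singleton]
        norm_num
      rw [hsf, Fb_zero_of_big ((k : ℤ) - 2 * 1 * l) 0 (by right; omega),
          Fb_zero_of_big ((k : ℤ) + 2 * 1 * l) 0 (by left; omega)]
      by_cases hk0 : k = 0
      · subst hk0
        rw [if_pos rfl]
        have : Fb 0 0 = 1 := by unfold Fb chooseZ; norm_num
        rw [Nat.cast_zero, this]; ring
      · rw [if_neg hk0, Fb_zero_of_big (k : ℤ) 0 (by left; omega)]; ring
    · intro hp
      rw [h0, if_neg (by omega)]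
  | succ N IH =>
    intro k hk
    by_cases hk0 : k = 0
    · subst hk0
      have hMu : Mu 0 (N + 1) = Mu 1 N := h1 N
      have h1l : 1 ≤ l - 2 := by omega
      constructor
      · intro hp
        have hNp : N % 2 = 1 % 2 := by omega
        have hstep := SfB_step (l := l) hl (k := 0) (by norm_num) (by omega) N
        norm_num at hstep
        rw [SfB_wall_neg (l := l) (N := N) (B := N + 1) (by omega)] at hstep
        show Mu 0 (N + 1) = SfB l (N + 1) (N + 2) ((0 : ℕ) : ℤ)
        rw [Nat.cast_zero, hMu, (IH 1 h1l).1 hNp, hstep]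
        ring
      · intro hp
        rw [hMu, (IH 1 h1l).2 (by omega)]
    · by_cases hkm : k ≤ l - 3
      · have hMu : Mu k (N + 1) = Mu (k - 1) N + Mu (k + 1) N := by
          have := h2 N k 0 (by omega) hkm
          simpa using this
        constructor
        · intro hp
          have e1 : Mu (k - 1) N = SfB l N (N + 1) ((k : ℤ) - 1) := by
            rw [(IH (k - 1) (by omega)).1 (by omega)]
            congr 1; omega
          have e2 : Mu (k + 1) N = SfB l N (N + 1) ((k : ℤ) + 1) := by
            rw [(IH (k + 1) (by omega)).1 (by omega)]
            norm_cast
          rw [hMu, e1, e2, ← SfB_step hl (by omega) (by omega) N]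
        · intro hp
          rw [hMu, (IH (k - 1) (by omega)).2 (by omega),
              (IH (k + 1) (by omega)).2 (by omega)]
          ring
      · have hkeq : k = l - 2 := by omega
        subst hkeq
        have hMu : Mu (l - 2) (N + 1) = Mu (l - 3) N := by
          have := h3 N 1 (le_refl 1)
          simpa using this
        constructor
        · intro hp
          have e1 : Mu (l - 3) N = SfB l N (N + 1) ((l : ℤ) - 3) := by
            rw [(IH (l - 3) (by omega)).1 (by omega)]
            congr 1; omega
          have hstep := SfB_step (l := l) hl (k := (l : ℤ) - 2) (by omega) (by omega) N
          have hwall : SfB l N (N + 1) ((l : ℤ) - 2 + 1) = 0 := by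
            rw [show (l : ℤ) - 2 + 1 = (l : ℤ) - 1 by ring]
            exact SfB_wall_pos hl (by omega)
          rw [hMu, e1, show ((l - 2 : ℕ) : ℤ) = (l : ℤ) - 2 by omega, hstep, hwall,
              show (l : ℤ) - 2 - 1 = (l : ℤ) - 3 by ring]
          ring
        · intro hp
          rw [hMu, (IH (l - 3) (by omega)).2 (by omega)]

lemma SfB_final (l : ℕ) (hl : 3 ≤ l) (N k : ℕ) (hk : k ≤ l - 2) :
    SfB l N (N + 1) (k : ℤ)
      = Fb (k : ℤ) N
        + ∑ j ∈ Finset.Icc 1 ((N + 1 + l) / (2 * l)), Fb (-2 * (j : ℤ) * l + k) N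
        + ∑ j ∈ Finset.Icc 1 ((N + 1) / (2 * l)), Fb ((k : ℤ) + 2 * (j : ℤ) * l) N := by
  have hlpos : 0 < 2 * l := by omega
  have hkz : (k : ℤ) ≤ (l : ℤ) - 2 := by omega
  set U1 := (N + 1 + l) / (2 * l) with hU1
  set U2 := (N + 1) / (2 * l) with hU2
  -- bounds on U1, U2
  have hd1 := Nat.div_add_mod (N + 1 + l) (2 * l)
  have hm1 : (N + 1 + l) % (2 * l) < 2 * l := Nat.mod_lt _ hlpos
  have hd2 := Nat.div_add_mod (N + 1) (2 * l)
  have hm2 : (N + 1) % (2 * l) < 2 * l := Nat.mod_lt _ hlpos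
  have hU1le : U1 ≤ N + 1 := by
    rw [hU1]
    rw [Nat.div_le_iff_le_mul_add_pred hlpos]
    nlinarith
  have hU2le : U2 ≤ N + 1 := le_trans (Nat.div_le_self _ _) (by omega)
  have hd1' : 2 * l * U1 + (N + 1 + l) % (2 * l) = N + 1 + l := by rw [hU1]; exact hd1
  have hd2' : 2 * l * U2 + (N + 1) % (2 * l) = N + 1 := by rw [hU2]; exact hd2
  have key1 : N + l + 2 ≤ (U1 + 1) * (2 * l) := by nlinarith [hd1', hm1]
  have key2 : N + 2 ≤ (U2 + 1) * (2 * l) := by nlinarith [hd2', hm2]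
  unfold SfB
  congr 1
  · congr 1
    apply (Finset.sum_subset (Finset.Icc_subset_Icc_right hU1le) _).symm.trans
    · apply Finset.sum_congr rfl
      intro j _
      congr 1; ring
    · intro j hj hj'
      simp only [Finset.mem_Icc] at hj hj'
      have hjU : U1 + 1 ≤ j := by omega
      have hjl : (U1 + 1) * (2 * l) ≤ j * (2 * l) := Nat.mul_le_mul_right _ hjU
      have hzz : (N : ℤ) + (l : ℤ) + 2 ≤ 2 * (j : ℤ) * (l : ℤ) := by
        have : N + l + 2 ≤ j * (2 * l) := le_trans key1 hjl
        have := (Nat.cast_le (α := ℤ)).mpr this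
        push_cast at this
        linarith
      apply Fb_zero_of_big
      right
      linarith
  · apply (Finset.sum_subset (Finset.Icc_subset_Icc_right hU2le) _).symm
    intro j hj hj'
    simp only [Finset.mem_Icc] at hj hj'
    have hjU : U2 + 1 ≤ j := by omega
    have hjl : (U2 + 1) * (2 * l) ≤ j * (2 * l) := Nat.mul_le_mul_right _ hjU
    have hzz : (N : ℤ) + 2 ≤ 2 * (j : ℤ) * (l : ℤ) := by
      have : N + 2 ≤ j * (2 * l) := le_trans key2 hjl
      have := (Nat.cast_le (α := ℤ)).mpr this
      push_cast at this
      linarith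
    apply Fb_zero_of_big
    left
    have hk0 : (0 : ℤ) ≤ (k : ℤ) := Int.ofNat_nonneg k
    linarith


/-- Explicit solution in the first strip `0 ≤ k ≤ l−2` of the multiplicity recursion
for tilting `U_q(sl₂)`-modules at an odd `l`-th root of unity:
`M_{T(k)}(N) = F_k^{(N)} + Σ_{j=1}^{⌊(N+1)/(2l)+1/2⌋} F_{−2jl+k}^{(N)}
             + Σ_{j=1}^{⌊(N+1)/(2l)⌋} F_{k+2jl}^{(N)}`. -/
theorem stmt11 (l : ℕ) (hl : 3 ≤ l) (hodd : Odd l)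
    (Mu : ℕ → ℕ → ℤ)
    (h0 : ∀ k, Mu k 0 = if k = 0 then 1 else 0)
    (h1 : ∀ N, Mu 0 (N + 1) = Mu 1 N)
    (h2 : ∀ N k₀ k₁, 1 ≤ k₀ → k₀ ≤ l - 3 →
      Mu (l * k₁ + k₀) (N + 1) = Mu (l * k₁ + k₀ - 1) N + Mu (l * k₁ + k₀ + 1) N)
    (h3 : ∀ N k₁, 1 ≤ k₁ → Mu (l * k₁ - 2) (N + 1) = Mu (l * k₁ - 3) N)
    (h4 : ∀ N k₁, 1 ≤ k₁ →
      Mu (l * k₁ - 1) (N + 1)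
        = Mu (l * k₁ - 2) N + 2 * Mu (l * k₁) N + Mu ((k₁ + 2) * l - 2) N)
    (h5 : ∀ N k₁, 1 ≤ k₁ →
      Mu (l * k₁) (N + 1) = Mu (l * k₁ - 1) N + Mu (l * k₁ + 1) N)
    (k N : ℕ) (hk : k ≤ l - 2) (hpar : N % 2 = k % 2) :
    Mu k N = Fb (k : ℤ) N
      + ∑ j ∈ Finset.Icc 1 ((N + 1 + l) / (2 * l)), Fb (-2 * (j : ℤ) * l + k) N
      + ∑ j ∈ Finset.Icc 1 ((N + 1) / (2 * l)), Fb ((k : ℤ) + 2 * (j : ℤ) * l) N := by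
  rw [(main_ind l hl Mu h0 h1 h2 h3 N k hk).1 hpar]
  exact SfB_final l hl N k hk
end
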